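/- For BiSample-MD, the minimum over all real inputs v ∈ [−1,1] of Pr[M(v)=(0,0)] equals Pr[M(−1)=(0,0)] = (1/2)·(1/(e^ε+1)), and Pr[M(⊥)=(0,0)] = (1/2)·(e^ε/(e^ε+1)), so their ratio is exactly e^ε. -/

import Mathlib

open Real

/-- Probability that BiSample-MD outputs `(0,0)` on a real input `v ∈ [−1,1]`. -/
noncomputable def pvZeroZero (ε v : ℝ) : ℝ :=
  1 / 2 * (1 - ((1 - exp ε) / (1 + exp ε) * (v / 2) + 1 / 2))

/-- Since `(1 - e^ε)/(1 + e^ε) = -tanh (ε/2)`, the probability is affine in `v` with slope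
`tanh (ε/2) / 4`, nonnegative for `ε ≥ 0`. -/
theorem pvZeroZero_eq (ε v : ℝ) :
    pvZeroZero ε v = (1 + (exp ε - 1) / (exp ε + 1) * v) / 4 := by
  unfold pvZeroZero
  rw [add_comm 1 (exp ε), ← neg_sub (exp ε) 1, neg_div]
  ring

theorem monotone_pvZeroZero {ε : ℝ} (hε : 0 ≤ ε) : Monotone (pvZeroZero ε) := by
  intro a b hab
  have hslope : 0 ≤ (exp ε - 1) / (exp ε + 1) :=
    div_nonneg (sub_nonneg.2 (one_le_exp hε)) (by positivity)
  rw [pvZeroZero_eq, pvZeroZero_eq]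
  gcongr

theorem pvZeroZero_neg_one (ε : ℝ) : pvZeroZero ε (-1) = 1 / 2 * (1 / (exp ε + 1)) := by
  rw [pvZeroZero_eq]
  field_simp
  ring

theorem one_sub_one_div_add_one {K : Type*} [Field K] {x : K} (hx : x + 1 ≠ 0) : 1 - 1 / (x + 1) = x / (x + 1) := by
  field_simp
  ring

/-- For BiSample-MD: the minimum over real inputs `v ∈ [−1,1]` of
`Pr[M(v)=(0,0)]` is attained at `v = −1` and equals `(1/2)·(1/(e^ε+1))`;
`Pr[M(⊥)=(0,0)] = (1/2)·(e^ε/(e^ε+1))`; and their ratio is exactly `e^ε`. -/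
theorem biSampleMD_ratio (ε : ℝ) (hε : 0 < ε) :
    (∀ v ∈ Set.Icc (-1 : ℝ) 1, pvZeroZero ε (-1) ≤ pvZeroZero ε v) ∧
    pvZeroZero ε (-1) = 1 / 2 * (1 / (exp ε + 1)) ∧
    1 / 2 * (1 - 1 / (exp ε + 1)) = 1 / 2 * (exp ε / (exp ε + 1)) ∧
    (1 / 2 * (1 - 1 / (exp ε + 1))) / pvZeroZero ε (-1) = exp ε := by
  have hne : exp ε + 1 ≠ 0 := by positivity
  have hbot := one_sub_one_div_add_one hne
  refine ⟨fun v hv => monotone_pvZeroZero hε.le hv.1, pvZeroZero_neg_one ε, by rw [hbot], ?_⟩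
  rw [pvZeroZero_neg_one, hbot]
  field_simp
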